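/- Let R > 0, m₀ > 0, T > 0. Suppose m, φ : B̄_R × [0,T] → ℝ are C² in the space variable with spatial derivatives jointly continuous, m is C¹ in time, ρ : ℝ × [0,T] → ℝ is 2π-periodic in its first argument and C¹, and X_c : [0,T] → ℝ is C¹, and that they satisfy: ∂_t m(x,t) = Δm(x,t) − m₀ Δφ(x,t) for all x ∈ B_R and t ∈ (0,T); ∇m(R cos θ, R sin θ, t) · (cos θ, sin θ) = 0 for all θ and t; and ∂_t ρ(θ,t) + X_c'(t) cos θ = ∇φ(R cos θ, R sin θ, t) · (cos θ, sin θ) for all θ and t. Then the quantity M(t) := ∫_{B_R} m(x,t) dx + m₀ R ∫_{−π}^{π} ρ(θ,t) dθ is constant on [0,T]. -/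

import Mathlib

/-!
Differentiating `M`, the myosin equation turns `d/dt ∫_{B_R} m` into `∫_{B_R} (Δm - m₀ Δφ)`.
By the divergence theorem on the disk, each of these integrals is `R` times the boundary integral
of the radial derivative: the Neumann condition kills the first one, and the kinematic condition
turns the second one into `∫ ∂_t ρ dθ`, the drift `X_c'(t) cos θ` integrating to zero over a
period. Hence `M' = 0` on `(0, T)`, and `M` is constant by the mean value theorem.

The divergence theorem is proved in polar coordinates `x = r (cos θ, sin θ)`: with `u`, `w` the
radial and angular unit vectors, `r Δf = ∂_r (r ∂_u f) + ∂_θ (∂_w f)`; integrating over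
`(0, R) × (-π, π)`, the first term leaves `R ∂_u f` at `r = R` and the second one vanishes by
periodicity in `θ`.
-/

open MeasureTheory Metric Set
open scoped RealInnerProductSpace

/-- The Laplacian of `f : ℝ² → ℝ`, as the sum of the second partial derivatives in the
standard coordinate directions. -/
noncomputable def laplacian2 (f : EuclideanSpace ℝ (Fin 2) → ℝ)
    (x : EuclideanSpace ℝ (Fin 2)) : ℝ :=
  ∑ i : Fin 2,
    fderiv ℝ (fun y => fderiv ℝ f y (EuclideanSpace.single i (1:ℝ))) x
      (EuclideanSpace.single i (1:ℝ))

/-- The point of `ℝ²` with Cartesian coordinates `(a, b)`. -/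
noncomputable def pt2 (a b : ℝ) : EuclideanSpace ℝ (Fin 2) :=
  (WithLp.equiv 2 (Fin 2 → ℝ)).symm ![a, b]

open Real Laplacian InnerProductSpace

local notation "ℝ²" => EuclideanSpace ℝ (Fin 2)

section Rectangle

variable {E : Type*} [NormedAddCommGroup E] [NormedSpace ℝ E] [CompleteSpace E]
  {a b c d : ℝ} {G G' : ℝ × ℝ → E}

theorem setIntegral_Ioo_prod_Ioo_of_hasDerivAt_snd (hcd : c ≤ d)
    (hG' : ContinuousOn G' (Icc a b ×ˢ Icc c d))
    (hG : ∀ x ∈ Ioo a b, ContinuousOn (fun y => G (x, y)) (Icc c d))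
    (hderiv : ∀ x ∈ Ioo a b, ∀ y ∈ Ioo c d, HasDerivAt (fun y => G (x, y)) (G' (x, y)) y) :
    ∫ p in Ioo a b ×ˢ Ioo c d, G' p = ∫ x in Ioo a b, (G (x, d) - G (x, c)) := by
  have hint : IntegrableOn G' (Ioo a b ×ˢ Ioo c d) :=
    (hG'.integrableOn_compact (isCompact_Icc.prod isCompact_Icc)).mono_set
      (prod_mono Ioo_subset_Icc_self Ioo_subset_Icc_self)
  rw [Measure.volume_eq_prod, setIntegral_prod _ hint]
  refine setIntegral_congr_fun measurableSet_Ioo fun x hx => ?_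
  rw [← integral_Ioc_eq_integral_Ioo, ← intervalIntegral.integral_of_le hcd]
  refine intervalIntegral.integral_eq_sub_of_hasDeriv_right_of_le hcd (hG x hx)
    (fun y hy => (hderiv x hx y hy).hasDerivWithinAt) (ContinuousOn.intervalIntegrable ?_)
  rw [uIcc_of_le hcd]
  exact hG'.comp (Continuous.prodMk_right x).continuousOn fun y hy =>
    ⟨Ioo_subset_Icc_self hx, hy⟩

theorem setIntegral_Ioo_prod_Ioo_of_hasDerivAt_fst (hab : a ≤ b)
    (hG' : ContinuousOn G' (Icc a b ×ˢ Icc c d))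
    (hG : ∀ y ∈ Ioo c d, ContinuousOn (fun x => G (x, y)) (Icc a b))
    (hderiv : ∀ y ∈ Ioo c d, ∀ x ∈ Ioo a b, HasDerivAt (fun x => G (x, y)) (G' (x, y)) x) :
    ∫ p in Ioo a b ×ˢ Ioo c d, G' p = ∫ y in Ioo c d, (G (b, y) - G (a, y)) := by
  rw [Measure.volume_eq_prod, ← setIntegral_prod_swap, ← Measure.volume_eq_prod]
  exact setIntegral_Ioo_prod_Ioo_of_hasDerivAt_snd (G := G ∘ Prod.swap) hab
    (hG'.comp continuous_swap.continuousOn fun p hp => ⟨hp.2, hp.1⟩) hG hderiv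

end Rectangle

section ParametricIntegral

variable {X E : Type*} [TopologicalSpace X] [MeasurableSpace X] [OpensMeasurableSpace X]
  {μ : Measure X} [IsFiniteMeasureOnCompacts μ] [NormedAddCommGroup E] [NormedSpace ℝ E]
  {K s : Set X} {u u' : X → ℝ → E} {a b : ℝ}

theorem continuousOn_setIntegral_of_continuousOn_prod [SecondCountableTopologyEither X E]
    (hK : IsCompact K) (hs : MeasurableSet s) (hsK : s ⊆ K)
    (hu : ContinuousOn (Function.uncurry u) (K ×ˢ Icc a b)) :
    ContinuousOn (fun t => ∫ x in s, u x t ∂μ) (Icc a b) := by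
  obtain ⟨C, hC⟩ := (hK.prod isCompact_Icc).exists_bound_of_continuousOn hu
  refine continuousOn_of_dominated (bound := fun _ => C) (fun t ht => ?_) (fun t ht => ?_)
    (integrableOn_const ((hK.measure_lt_top.trans_le' (measure_mono hsK)).ne)) ?_
  · exact ((hu.uncurry_right t ht).mono hsK).aestronglyMeasurable hs
  · exact (ae_restrict_iff' hs).2 (.of_forall fun x hx => hC (x, t) ⟨hsK hx, ht⟩)
  · exact (ae_restrict_iff' hs).2 (.of_forall fun x hx => hu.uncurry_left x (hsK hx))

theorem hasDerivAt_setIntegral_of_continuousOn_prod [T2Space X] (hK : IsCompact K)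
    (hs : MeasurableSet s) (hsK : s ⊆ K) (hu : ContinuousOn (Function.uncurry u) (K ×ˢ Icc a b))
    (hu' : ContinuousOn (Function.uncurry u') (K ×ˢ Icc a b))
    (hderiv : ∀ x ∈ s, ∀ t ∈ Ioo a b, HasDerivAt (u x) (u' x t) t) {t₀ : ℝ}
    (ht₀ : t₀ ∈ Ioo a b) :
    HasDerivAt (fun t => ∫ x in s, u x t ∂μ) (∫ x in s, u' x t₀ ∂μ) t₀ := by
  obtain ⟨C, hC⟩ := (hK.prod isCompact_Icc).exists_bound_of_continuousOn hu'
  have hslice {v : X → ℝ → E} (hv : ContinuousOn (Function.uncurry v) (K ×ˢ Icc a b))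
      {t : ℝ} (ht : t ∈ Icc a b) : IntegrableOn (v · t) s μ :=
    ((hv.uncurry_right t ht).integrableOn_compact hK).mono_set hsK
  refine (hasDerivAt_integral_of_dominated_loc_of_deriv_le (μ := μ.restrict s)
    (F := fun t x => u x t) (F' := fun t x => u' x t) (bound := fun _ => C)
    (isOpen_Ioo.mem_nhds ht₀) ?_ (hslice hu (Ioo_subset_Icc_self ht₀))
    (hslice hu' (Ioo_subset_Icc_self ht₀)).aestronglyMeasurable ?_
    (integrableOn_const (hK.measure_lt_top.trans_le' (measure_mono hsK)).ne)
    ((ae_restrict_iff' hs).2 (.of_forall hderiv))).2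
  · exact Filter.eventually_of_mem (isOpen_Ioo.mem_nhds ht₀) fun t ht =>
      (hslice hu (Ioo_subset_Icc_self ht)).aestronglyMeasurable
  · exact (ae_restrict_iff' hs).2 (.of_forall fun x hx t ht =>
      hC (x, t) ⟨hsK hx, Ioo_subset_Icc_self ht⟩)

theorem hasDerivAt_setIntegral_of_deriv_eq [T2Space X] (hK : IsCompact K) (hs : MeasurableSet s)
    (hsK : s ⊆ K) (hu : ContinuousOn (Function.uncurry u) (K ×ˢ Icc a b))
    (hu' : ContinuousOn (Function.uncurry u') (K ×ˢ Icc a b))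
    (hu_time : ∀ x ∈ s, ContDiffOn ℝ 1 (u x) (Icc a b))
    (hderiv : ∀ x ∈ s, ∀ t ∈ Ioo a b, deriv (u x) t = u' x t) {t₀ : ℝ} (ht₀ : t₀ ∈ Ioo a b) :
    HasDerivAt (fun t => ∫ x in s, u x t ∂μ) (∫ x in s, u' x t₀ ∂μ) t₀ :=
  hasDerivAt_setIntegral_of_continuousOn_prod hK hs hsK hu hu' (fun x hx t ht => hderiv x hx t ht ▸
    (((hu_time x hx).contDiffAt (Icc_mem_nhds ht.1 ht.2)).differentiableAt one_ne_zero).hasDerivAt)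
    ht₀

end ParametricIntegral

section PartialDerivative

variable {F : Type*} [NormedAddCommGroup F] [NormedSpace ℝ F] {f : ℝ → ℝ → F}

theorem ContDiff.hasDerivAt_uncurry_right (hf : ContDiff ℝ 1 (Function.uncurry f)) (a t : ℝ) :
    HasDerivAt (f a) (fderiv ℝ (Function.uncurry f) (a, t) (0, 1)) t :=
  ((hf.differentiable one_ne_zero) (a, t)).hasFDerivAt.comp_hasDerivAt t
    ((hasDerivAt_const t a).prodMk (hasDerivAt_id t))

theorem ContDiff.continuous_deriv_uncurry_right (hf : ContDiff ℝ 1 (Function.uncurry f)) :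
    Continuous fun p : ℝ × ℝ => deriv (f p.1) p.2 := by
  simp_rw [fun p : ℝ × ℝ => (hf.hasDerivAt_uncurry_right p.1 p.2).deriv]
  exact (hf.continuous_fderiv one_ne_zero).clm_apply continuous_const

theorem ContDiff.hasDerivAt_intervalIntegral_uncurry (hf : ContDiff ℝ 1 (Function.uncurry f))
    {a b : ℝ} (hab : a ≤ b) (t : ℝ) :
    HasDerivAt (fun t => ∫ θ in a..b, f θ t) (∫ θ in a..b, deriv (f θ) t) t := by
  simp only [intervalIntegral.integral_of_le hab]
  exact hasDerivAt_setIntegral_of_continuousOn_prod (u' := fun θ t => deriv (f θ) t)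
    (a := t - 1) (b := t + 1) isCompact_Icc measurableSet_Ioc Ioc_subset_Icc_self
    hf.continuous.continuousOn hf.continuous_deriv_uncurry_right.continuousOn
    (fun θ _ s _ => (hf.hasDerivAt_uncurry_right θ s).differentiableAt.hasDerivAt)
    ⟨by linarith, by linarith⟩

end PartialDerivative

theorem eq_of_hasDerivAt_zero {f : ℝ → ℝ} {a b : ℝ} (hf : ContinuousOn f (Icc a b))
    (hf' : ∀ t ∈ Ioo a b, HasDerivAt f 0 t) :
    ∀ t₁ ∈ Icc a b, ∀ t₂ ∈ Icc a b, f t₁ = f t₂ := by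
  suffices ∀ t₁ ∈ Icc a b, ∀ t₂ ∈ Icc a b, t₁ < t₂ → f t₁ = f t₂ by
    intro t₁ ht₁ t₂ ht₂
    rcases lt_trichotomy t₁ t₂ with h | rfl | h
    exacts [this t₁ ht₁ t₂ ht₂ h, rfl, (this t₂ ht₂ t₁ ht₁ h).symm]
  intro t₁ ht₁ t₂ ht₂ h
  obtain ⟨c, -, hc⟩ := exists_hasDerivAt_eq_slope f (fun _ => 0) h
    (hf.mono (Icc_subset_Icc ht₁.1 ht₂.2)) fun t ht => hf' t (Ioo_subset_Ioo ht₁.1 ht₂.2 ht)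
  rw [eq_comm, div_eq_zero_iff, sub_eq_zero] at hc
  exact (hc.resolve_right (sub_ne_zero.2 h.ne')).symm

section Derivatives

variable {E F : Type*} [NormedAddCommGroup E] [NormedSpace ℝ E] [NormedAddCommGroup F]
  [NormedSpace ℝ F] {f : E → F}

theorem ContinuousOn.fderiv_of_iteratedFDeriv_one {s : Set E}
    (h : ContinuousOn (iteratedFDeriv ℝ 1 f) s) : ContinuousOn (fderiv ℝ f) s := by
  have : fderiv ℝ f = continuousMultilinearCurryFin1 ℝ E F ∘ iteratedFDeriv ℝ 1 f := by
    ext x v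
    simp
  rw [this]
  exact (continuousMultilinearCurryFin1 ℝ E F).continuous.comp_continuousOn h

theorem ContinuousOn.iteratedFDeriv_slice {k : ℕ} {u : E → ℝ → F} {s : Set E} {T : Set ℝ}
    (hu : ContinuousOn (fun p : E × ℝ => iteratedFDeriv ℝ k (u · p.2) p.1) (s ×ˢ T)) {t : ℝ}
    (ht : t ∈ T) : ContinuousOn (iteratedFDeriv ℝ k (u · t)) s :=
  hu.comp (Continuous.prodMk_left t).continuousOn fun _ hx => ⟨hx, ht⟩

theorem ContinuousOn.uncurry_of_iteratedFDeriv_zero {u : E → ℝ → F} {S : Set (E × ℝ)}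
    (h : ContinuousOn (fun p : E × ℝ => iteratedFDeriv ℝ 0 (u · p.2) p.1) S) :
    ContinuousOn (Function.uncurry u) S := by
  simpa [Function.uncurry_def] using h.eval (continuousOn_const (c := (0 : Fin 0 → E)))

theorem ContDiffAt.hasDerivAt_fderiv_apply {γ v : ℝ → E} {γ' v' : E} {t : ℝ}
    (hf : ContDiffAt ℝ 2 f (γ t)) (hγ : HasDerivAt γ γ' t) (hv : HasDerivAt v v' t) :
    HasDerivAt (fun s => fderiv ℝ f (γ s) (v s))
      (iteratedFDeriv ℝ 2 f (γ t) ![γ', v t] + fderiv ℝ f (γ t) v') t := by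
  have hd : DifferentiableAt ℝ (fderiv ℝ f) (γ t) :=
    (hf.fderiv_right (m := 1) le_rfl).differentiableAt one_ne_zero
  simpa [iteratedFDeriv_two_apply, add_comm] using
    (hd.hasFDerivAt.comp_hasDerivAt t hγ).clm_apply hv

end Derivatives

theorem continuousOn_laplacian_apply {X E F : Type*} [TopologicalSpace X] [NormedAddCommGroup E]
    [InnerProductSpace ℝ E] [FiniteDimensional ℝ E] [NormedAddCommGroup F] [NormedSpace ℝ F]
    {g : X → E → F} {y : X → E} {S : Set X}
    (h : ContinuousOn (fun p => iteratedFDeriv ℝ 2 (g p) (y p)) S) :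
    ContinuousOn (fun p => Δ (g p) (y p)) S := by
  simp_rw [laplacian_eq_iteratedFDeriv_stdOrthonormalBasis]
  exact continuousOn_finsetSum _ fun i _ => h.eval continuousOn_const

noncomputable def pt2Equiv : (ℝ × ℝ) ≃L[ℝ] ℝ² :=
  (ContinuousLinearEquiv.finTwoArrow ℝ ℝ).symm.trans (EuclideanSpace.equiv (Fin 2) ℝ).symm

theorem Continuous.pt2 {X : Type*} [TopologicalSpace X] {f g : X → ℝ} (hf : Continuous f)
    (hg : Continuous g) : Continuous fun x => pt2 (f x) (g x) :=
  pt2Equiv.continuous.comp (hf.prodMk hg)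

theorem HasDerivAt.pt2 {f g : ℝ → ℝ} {f' g' t : ℝ} (hf : HasDerivAt f f' t)
    (hg : HasDerivAt g g' t) : HasDerivAt (fun s => pt2 (f s) (g s)) (pt2 f' g') t :=
  (pt2Equiv : (ℝ × ℝ) →L[ℝ] ℝ²).hasFDerivAt.comp_hasDerivAt t (hf.prodMk hg)

theorem smul_pt2 (r a b : ℝ) : r • pt2 a b = pt2 (r * a) (r * b) :=
  (map_smul pt2Equiv r (a, b)).symm

theorem neg_pt2 (a b : ℝ) : -pt2 a b = pt2 (-a) (-b) :=
  (map_neg pt2Equiv (a, b)).symm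

theorem norm_pt2 (a b : ℝ) : ‖pt2 a b‖ = √(a ^ 2 + b ^ 2) := by
  simp [pt2, EuclideanSpace.norm_eq, Fin.sum_univ_two]

theorem integral_comp_pt2 {E : Type*} [NormedAddCommGroup E] [NormedSpace ℝ E] (g : ℝ² → E) :
    ∫ p : ℝ × ℝ, g (pt2 p.1 p.2) = ∫ x, g x := by
  rw [← (PiLp.volume_preserving_toLp (Fin 2)).integral_comp
    (MeasurableEquiv.toLp 2 _).measurableEmbedding,
    ← (volume_preserving_finTwoArrow ℝ).symm.integral_comp']
  rfl

noncomputable def polarPoint (r θ : ℝ) : ℝ² := pt2 (r * cos θ) (r * sin θ)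

noncomputable def radialUnit (θ : ℝ) : ℝ² := pt2 (cos θ) (sin θ)

noncomputable def angularUnit (θ : ℝ) : ℝ² := pt2 (-sin θ) (cos θ)

theorem norm_polarPoint (r θ : ℝ) : ‖polarPoint r θ‖ = |r| := by
  rw [polarPoint, norm_pt2, mul_pow, mul_pow, ← mul_add, cos_sq_add_sin_sq, mul_one,
    sqrt_sq_eq_abs]

theorem polarPoint_mem_ball {r R : ℝ} (θ : ℝ) (hr : r ∈ Ioo 0 R) :
    polarPoint r θ ∈ ball 0 R := by
  rw [mem_ball_zero_iff, norm_polarPoint, abs_of_pos hr.1]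
  exact hr.2

theorem continuous_polarPoint : Continuous fun p : ℝ × ℝ => polarPoint p.1 p.2 :=
  (continuous_fst.mul (continuous_cos.comp continuous_snd)).pt2
    (continuous_fst.mul (continuous_sin.comp continuous_snd))

theorem ContinuousOn.comp_polarPoint {Z : Type*} [TopologicalSpace Z] {F : ℝ² → Z} {R : ℝ}
    (hF : ContinuousOn F (closedBall 0 R)) (s : Set ℝ) :
    ContinuousOn (fun p : ℝ × ℝ => F (polarPoint p.1 p.2)) (Icc 0 R ×ˢ s) :=
  hF.comp continuous_polarPoint.continuousOn fun p hp => by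
    rw [mem_closedBall_zero_iff, norm_polarPoint, abs_of_nonneg hp.1.1]
    exact hp.1.2

theorem continuous_radialUnit : Continuous radialUnit :=
  continuous_cos.pt2 continuous_sin

theorem continuous_angularUnit : Continuous angularUnit :=
  continuous_sin.neg.pt2 continuous_cos

theorem hasDerivAt_polarPoint_radius (r θ : ℝ) :
    HasDerivAt (polarPoint · θ) (radialUnit θ) r := by
  unfold polarPoint radialUnit
  simpa using ((hasDerivAt_id r).mul_const (cos θ)).pt2 ((hasDerivAt_id r).mul_const (sin θ))

theorem hasDerivAt_polarPoint_angle (r θ : ℝ) :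
    HasDerivAt (polarPoint r) (r • angularUnit θ) θ := by
  rw [angularUnit, smul_pt2]
  exact ((hasDerivAt_cos θ).const_mul r).pt2 ((hasDerivAt_sin θ).const_mul r)

theorem hasDerivAt_angularUnit (θ : ℝ) : HasDerivAt angularUnit (-radialUnit θ) θ := by
  rw [radialUnit, neg_pt2]
  exact (hasDerivAt_sin θ).neg.pt2 (hasDerivAt_cos θ)

theorem integral_ball_eq_integral_polar {E : Type*} [NormedAddCommGroup E] [NormedSpace ℝ E]
    (R : ℝ) (g : ℝ² → E) :
    ∫ x in ball 0 R, g x = ∫ p in Ioo 0 R ×ˢ Ioo (-π) π, p.1 • g (polarPoint p.1 p.2) := by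
  set Ω := Ioo 0 R ×ˢ Ioo (-π) π
  have hmem : ∀ p ∈ polarCoord.target, polarPoint p.1 p.2 ∈ ball (0 : ℝ²) R ↔ p ∈ Ω := by
    rintro ⟨r, θ⟩ ⟨hr : 0 < r, hθ⟩
    simp_all [Ω, norm_polarPoint, abs_of_pos hr]
  calc ∫ x in ball 0 R, g x
      = ∫ p in polarCoord.target, p.1 • (ball 0 R).indicator g (polarPoint p.1 p.2) := by
        rw [← integral_indicator measurableSet_ball, ← integral_comp_pt2,
          ← integral_comp_polarCoord_symm]
        rfl
    _ = ∫ p in polarCoord.target, Ω.indicator (fun p => p.1 • g (polarPoint p.1 p.2)) p := by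
        refine setIntegral_congr_fun polarCoord.open_target.measurableSet fun p hp => ?_
        by_cases h : p ∈ Ω
        · rw [indicator_of_mem h, indicator_of_mem ((hmem p hp).2 h)]
        · rw [indicator_of_notMem h, indicator_of_notMem (mt (hmem p hp).1 h), smul_zero]
    _ = ∫ p in Ω, p.1 • g (polarPoint p.1 p.2) := by
        rw [setIntegral_indicator (measurableSet_Ioo.prod measurableSet_Ioo),
          inter_eq_self_of_subset_right (show Ω ⊆ polarCoord.target from
            prod_mono Ioo_subset_Ioi_self le_rfl)]

section Disk

variable {f : ℝ² → ℝ}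

theorem orthonormal_radialUnit_angularUnit (θ : ℝ) :
    Orthonormal ℝ ![radialUnit θ, angularUnit θ] := by
  rw [orthonormal_iff_ite]
  intro i j
  fin_cases i <;> fin_cases j <;>
    simp [radialUnit, angularUnit, pt2, PiLp.inner_apply, EuclideanSpace.norm_eq,
      Fin.sum_univ_two] <;> ring

theorem laplacian_eq_radialUnit_add_angularUnit (x : ℝ²) (θ : ℝ) :
    Δ f x = iteratedFDeriv ℝ 2 f x ![radialUnit θ, radialUnit θ]
      + iteratedFDeriv ℝ 2 f x ![angularUnit θ, angularUnit θ] := by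
  have hon := orthonormal_radialUnit_angularUnit θ
  have hspan : ⊤ ≤ Submodule.span ℝ (range ![radialUnit θ, angularUnit θ]) :=
    (hon.linearIndependent.span_eq_top_of_card_eq_finrank (by simp)).ge
  rw [laplacian_eq_iteratedFDeriv_orthonormalBasis f (OrthonormalBasis.mk hon hspan)]
  simp [Fin.sum_univ_two]

theorem laplacian2_eq_laplacian {x : ℝ²} (hf : ContDiffAt ℝ 2 f x) :
    laplacian2 f x = Δ f x := by
  have hdiff : DifferentiableAt ℝ (fderiv ℝ f) x :=
    (hf.fderiv_right (m := 1) le_rfl).differentiableAt one_ne_zero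
  rw [laplacian_eq_iteratedFDeriv_orthonormalBasis f (EuclideanSpace.basisFun (Fin 2) ℝ),
    laplacian2]
  refine Finset.sum_congr rfl fun i _ => ?_
  rw [fderiv_clm_apply hdiff (differentiableAt_const _), iteratedFDeriv_two_apply]
  simp

theorem laplacian2_eq_laplacian_of_mem_ball {R : ℝ} (hf : ContDiffOn ℝ 2 f (closedBall 0 R))
    {x : ℝ²} (hx : x ∈ ball 0 R) : laplacian2 f x = Δ f x :=
  laplacian2_eq_laplacian (hf.contDiffAt (closedBall_mem_nhds_of_mem hx))

theorem integrableOn_laplacian_ball {R : ℝ}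
    (hf : ContinuousOn (iteratedFDeriv ℝ 2 f) (closedBall 0 R)) :
    IntegrableOn (Δ f) (ball 0 R) :=
  ((continuousOn_laplacian_apply (g := fun _ => f) hf).integrableOn_compact
    (isCompact_closedBall 0 R)).mono_set ball_subset_closedBall

theorem hasDerivAt_mul_fderiv_polarPoint_radialUnit {r θ : ℝ}
    (hf : ContDiffAt ℝ 2 f (polarPoint r θ)) :
    HasDerivAt (fun s => s * fderiv ℝ f (polarPoint s θ) (radialUnit θ))
      (fderiv ℝ f (polarPoint r θ) (radialUnit θ)
        + r * iteratedFDeriv ℝ 2 f (polarPoint r θ) ![radialUnit θ, radialUnit θ]) r := by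
  refine ((hasDerivAt_id r).mul (hf.hasDerivAt_fderiv_apply (γ := (polarPoint · θ))
    (hasDerivAt_polarPoint_radius r θ) (hasDerivAt_const r (radialUnit θ)))).congr_deriv ?_
  simp

theorem hasDerivAt_fderiv_polarPoint_angularUnit {r θ : ℝ}
    (hf : ContDiffAt ℝ 2 f (polarPoint r θ)) :
    HasDerivAt (fun ψ => fderiv ℝ f (polarPoint r ψ) (angularUnit ψ))
      (r * iteratedFDeriv ℝ 2 f (polarPoint r θ) ![angularUnit θ, angularUnit θ]
        - fderiv ℝ f (polarPoint r θ) (radialUnit θ)) θ := by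
  refine (hf.hasDerivAt_fderiv_apply (hasDerivAt_polarPoint_angle r θ)
    (hasDerivAt_angularUnit θ)).congr_deriv ?_
  simp [iteratedFDeriv_two_apply, sub_eq_add_neg]

theorem integral_laplacian_ball {R : ℝ} (hR : 0 < R) (hf : ContDiffOn ℝ 2 f (closedBall 0 R))
    (hf₁ : ContinuousOn (fderiv ℝ f) (closedBall 0 R))
    (hf₂ : ContinuousOn (iteratedFDeriv ℝ 2 f) (closedBall 0 R)) :
    ∫ x in ball 0 R, Δ f x = R * ∫ θ in -π..π, fderiv ℝ f (polarPoint R θ) (radialUnit θ) := by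
  have hπ : -π ≤ π := by linarith [pi_pos]
  set Ω := Ioo 0 R ×ˢ Ioo (-π) π
  set K := Icc 0 R ×ˢ Icc (-π) π
  set D₂ : ℝ × ℝ → ℝ² → ℝ := fun p v => iteratedFDeriv ℝ 2 f (polarPoint p.1 p.2) ![v, v]
  -- `A = ∂_u f` and `B = ∂_w f` in polar coordinates; `A' = ∂_r (r A)` and `B' = ∂_θ B`.
  set A : ℝ × ℝ → ℝ := fun p => fderiv ℝ f (polarPoint p.1 p.2) (radialUnit p.2)
  set B : ℝ × ℝ → ℝ := fun p => fderiv ℝ f (polarPoint p.1 p.2) (angularUnit p.2)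
  set A' : ℝ × ℝ → ℝ := fun p => A p + p.1 * D₂ p (radialUnit p.2)
  set B' : ℝ × ℝ → ℝ := fun p => p.1 * D₂ p (angularUnit p.2) - A p
  have hD₁ {g : ℝ → ℝ²} (hg : Continuous g) :
      ContinuousOn (fun p => fderiv ℝ f (polarPoint p.1 p.2) (g p.2)) K :=
    (hf₁.comp_polarPoint _).clm_apply (hg.comp continuous_snd).continuousOn
  have hD₂ {g : ℝ → ℝ²} (hg : Continuous g) : ContinuousOn (fun p => D₂ p (g p.2)) K :=
    (hf₂.comp_polarPoint _).eval
      (by fun_prop : Continuous fun p : ℝ × ℝ => ![g p.2, g p.2]).continuousOn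
  have hA : ContinuousOn A K := hD₁ continuous_radialUnit
  have hB : ContinuousOn B K := hD₁ continuous_angularUnit
  have hA' : ContinuousOn A' K := hA.add (continuousOn_fst.mul (hD₂ continuous_radialUnit))
  have hB' : ContinuousOn B' K := (continuousOn_fst.mul (hD₂ continuous_angularUnit)).sub hA
  have hint {G : ℝ × ℝ → ℝ} (hG : ContinuousOn G K) : IntegrableOn G Ω :=
    (hG.integrableOn_compact (isCompact_Icc.prod isCompact_Icc)).mono_set
      (prod_mono Ioo_subset_Icc_self Ioo_subset_Icc_self)
  have hfP {r : ℝ} (hr : r ∈ Ioo 0 R) (θ : ℝ) : ContDiffAt ℝ 2 f (polarPoint r θ) :=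
    hf.contDiffAt (closedBall_mem_nhds_of_mem (polarPoint_mem_ball θ hr))
  have hB_periodic (r : ℝ) : B (r, π) = B (r, -π) := by simp [B, polarPoint, angularUnit]
  calc ∫ x in ball 0 R, Δ f x
      = ∫ p in Ω, (A' p + B' p) := by
        rw [integral_ball_eq_integral_polar]
        refine setIntegral_congr_fun (measurableSet_Ioo.prod measurableSet_Ioo) fun p _ => ?_
        simp only [A', B', D₂, smul_eq_mul, laplacian_eq_radialUnit_add_angularUnit _ p.2]
        ring
    _ = (∫ p in Ω, A' p) + ∫ p in Ω, B' p := integral_add (hint hA') (hint hB')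
    _ = (∫ θ in Ioo (-π) π, (R * A (R, θ) - 0 * A (0, θ)))
          + ∫ r in Ioo 0 R, (B (r, π) - B (r, -π)) := by
        rw [setIntegral_Ioo_prod_Ioo_of_hasDerivAt_fst (G := fun p => p.1 * A p) hR.le hA'
            (fun θ hθ => continuousOn_id.mul (hA.comp (Continuous.prodMk_left θ).continuousOn
              fun r hr => ⟨hr, Ioo_subset_Icc_self hθ⟩))
            (fun θ _ r hr => hasDerivAt_mul_fderiv_polarPoint_radialUnit (hfP hr θ)),
          setIntegral_Ioo_prod_Ioo_of_hasDerivAt_snd hπ hB'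
            (fun r hr => hB.comp (Continuous.prodMk_right r).continuousOn
              fun θ hθ => ⟨Ioo_subset_Icc_self hr, hθ⟩)
            (fun r hr θ _ => hasDerivAt_fderiv_polarPoint_angularUnit (hfP hr θ))]
    _ = R * ∫ θ in -π..π, fderiv ℝ f (polarPoint R θ) (radialUnit θ) := by
        simp [hB_periodic, integral_const_mul, intervalIntegral.integral_of_le hπ,
          integral_Ioc_eq_integral_Ioo, A]

theorem integral_laplacian_ball_slice {u : ℝ² → ℝ → ℝ} {R : ℝ} {T : Set ℝ} {t : ℝ} (hR : 0 < R)
    (hu : ∀ t ∈ T, ContDiffOn ℝ 2 (u · t) (closedBall 0 R))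
    (hu_cont : ∀ k ≤ 2, ContinuousOn (fun p : ℝ² × ℝ => iteratedFDeriv ℝ k (u · p.2) p.1)
      (closedBall 0 R ×ˢ T)) (ht : t ∈ T) :
    ∫ x in ball 0 R, Δ (u · t) x
      = R * ∫ θ in -π..π, fderiv ℝ (u · t) (polarPoint R θ) (radialUnit θ) :=
  integral_laplacian_ball hR (hu t ht)
    ((hu_cont 1 (by norm_num)).iteratedFDeriv_slice ht).fderiv_of_iteratedFDeriv_one
    ((hu_cont 2 le_rfl).iteratedFDeriv_slice ht)

end Disk

theorem integral_add_mul_cos {g : ℝ → ℝ} (hg : IntervalIntegrable g volume (-π) π) (c : ℝ) :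
    ∫ θ in -π..π, (g θ + c * cos θ) = ∫ θ in -π..π, g θ := by
  rw [intervalIntegral.integral_add (g := fun θ => c * cos θ) hg
    ((continuous_const.mul continuous_cos).intervalIntegrable _ _)]
  simp

theorem linearized_myosin_mass_conservation_general
    (R m₀ T : ℝ) (hR : 0 < R)
    (m φ : EuclideanSpace ℝ (Fin 2) → ℝ → ℝ) (ρ : ℝ → ℝ → ℝ) (Xc : ℝ → ℝ)
    -- `m` and `φ` are C² in the space variable
    (hm_space : ∀ t ∈ Icc (0:ℝ) T, ContDiffOn ℝ 2 (fun x => m x t) (closedBall 0 R))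
    (hφ_space : ∀ t ∈ Icc (0:ℝ) T, ContDiffOn ℝ 2 (fun x => φ x t) (closedBall 0 R))
    -- spatial derivatives up to order 2 are jointly continuous in (x,t)
    (hm_cont : ∀ k : ℕ, k ≤ 2 → ContinuousOn
      (fun p : EuclideanSpace ℝ (Fin 2) × ℝ => iteratedFDeriv ℝ k (fun x => m x p.2) p.1)
      (closedBall 0 R ×ˢ Icc (0:ℝ) T))
    (hφ_cont : ∀ k : ℕ, k ≤ 2 → ContinuousOn
      (fun p : EuclideanSpace ℝ (Fin 2) × ℝ => iteratedFDeriv ℝ k (fun x => φ x p.2) p.1)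
      (closedBall 0 R ×ˢ Icc (0:ℝ) T))
    -- `m` is C¹ in time
    (hm_time : ∀ x ∈ closedBall (0 : EuclideanSpace ℝ (Fin 2)) R,
      ContDiffOn ℝ 1 (m x) (Icc (0:ℝ) T))
    -- `ρ` is 2π-periodic in its first argument and C¹
    (hρ_C1 : ContDiff ℝ 1 (Function.uncurry ρ))
    -- the linearized myosin equation `∂_t m = Δm − m₀ Δφ` in `B_R × (0,T)`
    (heq : ∀ x ∈ ball (0 : EuclideanSpace ℝ (Fin 2)) R, ∀ t ∈ Ioo (0:ℝ) T,
      deriv (m x) t = laplacian2 (fun y => m y t) x - m₀ * laplacian2 (fun y => φ y t) x)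
    -- homogeneous Neumann condition for `m` on the boundary circle
    (hneu : ∀ θ : ℝ, ∀ t ∈ Icc (0:ℝ) T,
      ⟪gradient (fun y => m y t) (pt2 (R * Real.cos θ) (R * Real.sin θ)),
        pt2 (Real.cos θ) (Real.sin θ)⟫ = (0:ℝ))
    -- kinematic condition on the boundary circle
    (hkin : ∀ θ : ℝ, ∀ t ∈ Ioo (0:ℝ) T,
      deriv (ρ θ) t + deriv Xc t * Real.cos θ
        = ⟪gradient (fun y => φ y t) (pt2 (R * Real.cos θ) (R * Real.sin θ)),
            pt2 (Real.cos θ) (Real.sin θ)⟫) :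
    ∀ t₁ ∈ Icc (0:ℝ) T, ∀ t₂ ∈ Icc (0:ℝ) T,
      (∫ x in ball (0 : EuclideanSpace ℝ (Fin 2)) R, m x t₁)
          + m₀ * R * ∫ θ in (-Real.pi)..Real.pi, ρ θ t₁
        = (∫ x in ball (0 : EuclideanSpace ℝ (Fin 2)) R, m x t₂)
            + m₀ * R * ∫ θ in (-Real.pi)..Real.pi, ρ θ t₂ := by
  simp only [inner_gradient_left] at hneu hkin
  have hπ : -π ≤ π := by linarith [pi_pos]
  have hm := (hm_cont 0 (by norm_num)).uncurry_of_iteratedFDeriv_zero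
  have hρ := hρ_C1.hasDerivAt_intervalIntegral_uncurry hπ
  have hflux_m : ∀ t ∈ Icc 0 T, ∫ x in ball 0 R, Δ (m · t) x = 0 := fun t ht => by
    rw [integral_laplacian_ball_slice hR hm_space hm_cont ht,
      intervalIntegral.integral_congr (g := 0) fun θ _ => by exact hneu θ t ht]
    simp
  have hflux_φ : ∀ t ∈ Ioo 0 T,
      ∫ x in ball 0 R, Δ (φ · t) x = R * ∫ θ in -π..π, deriv (ρ θ) t := fun t ht => by
    rw [integral_laplacian_ball_slice hR hφ_space hφ_cont (Ioo_subset_Icc_self ht),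
      intervalIntegral.integral_congr (g := fun θ => deriv (ρ θ) t + deriv Xc t * cos θ)
        fun θ _ => by exact (hkin θ t ht).symm,
      integral_add_mul_cos (g := fun θ => deriv (ρ θ) t)
        ((hρ_C1.continuous_deriv_uncurry_right.comp
          (continuous_id.prodMk continuous_const)).intervalIntegrable _ _)]
  have hbulk : ∀ t ∈ Ioo 0 T, HasDerivAt (fun t => ∫ x in ball 0 R, m x t)
      (∫ x in ball 0 R, (Δ (m · t) x - m₀ * Δ (φ · t) x)) t := fun t =>
    hasDerivAt_setIntegral_of_deriv_eq (u' := fun x t => Δ (m · t) x - m₀ * Δ (φ · t) x)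
      (isCompact_closedBall 0 R) measurableSet_ball ball_subset_closedBall hm
      ((continuousOn_laplacian_apply (hm_cont 2 le_rfl)).sub
        (continuousOn_const.mul (continuousOn_laplacian_apply (hφ_cont 2 le_rfl))))
      (fun x hx => hm_time x (ball_subset_closedBall hx)) fun x hx t ht => by
        rw [heq x hx t ht,
          laplacian2_eq_laplacian_of_mem_ball (hm_space t (Ioo_subset_Icc_self ht)) hx,
          laplacian2_eq_laplacian_of_mem_ball (hφ_space t (Ioo_subset_Icc_self ht)) hx]
  refine eq_of_hasDerivAt_zero (f := fun t => (∫ x in ball 0 R, m x t)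
      + m₀ * R * ∫ θ in -π..π, ρ θ t)
    ((continuousOn_setIntegral_of_continuousOn_prod (isCompact_closedBall 0 R)
      measurableSet_ball ball_subset_closedBall hm).add (continuousOn_const.mul
        (continuous_iff_continuousAt.2 fun t => (hρ t).continuousAt).continuousOn))
    fun t ht => ((hbulk t ht).add ((hρ t).const_mul (m₀ * R))).congr_deriv ?_
  have ht' := Ioo_subset_Icc_self ht
  rw [integral_sub (integrableOn_laplacian_ball ((hm_cont 2 le_rfl).iteratedFDeriv_slice ht'))
    ((integrableOn_laplacian_ball ((hφ_cont 2 le_rfl).iteratedFDeriv_slice ht')).const_mul m₀),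
    integral_const_mul, hflux_m t ht', hflux_φ t ht]
  ring

/-- Let `R > 0`, `m₀ > 0`, `T > 0`. Suppose `m, φ : B̄_R × [0,T] → ℝ` are
`C²` in the space variable with spatial derivatives jointly continuous, `m` is `C¹` in time,
`ρ : ℝ × [0,T] → ℝ` is `2π`-periodic in its first argument and `C¹`, and `X_c : [0,T] → ℝ`
is `C¹`, and that they satisfy: `∂_t m = Δm − m₀ Δφ` in `B_R × (0,T)`; the homogeneous
Neumann condition `∂_r m = 0` on the boundary circle; and the kinematic condition
`∂_t ρ(θ,t) + X_c'(t) cos θ = ∂_r φ(R cos θ, R sin θ, t)`. Then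
`M(t) := ∫_{B_R} m(x,t) dx + m₀ R ∫_{−π}^{π} ρ(θ,t) dθ` is constant on `[0,T]`. -/
theorem linearized_myosin_mass_conservation
    (R m₀ T : ℝ) (hR : 0 < R) (hm₀ : 0 < m₀) (hT : 0 < T)
    (m φ : EuclideanSpace ℝ (Fin 2) → ℝ → ℝ) (ρ : ℝ → ℝ → ℝ) (Xc : ℝ → ℝ)
    -- `m` and `φ` are C² in the space variable
    (hm_space : ∀ t ∈ Icc (0:ℝ) T, ContDiffOn ℝ 2 (fun x => m x t) (closedBall 0 R))
    (hφ_space : ∀ t ∈ Icc (0:ℝ) T, ContDiffOn ℝ 2 (fun x => φ x t) (closedBall 0 R))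
    -- spatial derivatives up to order 2 are jointly continuous in (x,t)
    (hm_cont : ∀ k : ℕ, k ≤ 2 → ContinuousOn
      (fun p : EuclideanSpace ℝ (Fin 2) × ℝ => iteratedFDeriv ℝ k (fun x => m x p.2) p.1)
      (closedBall 0 R ×ˢ Icc (0:ℝ) T))
    (hφ_cont : ∀ k : ℕ, k ≤ 2 → ContinuousOn
      (fun p : EuclideanSpace ℝ (Fin 2) × ℝ => iteratedFDeriv ℝ k (fun x => φ x p.2) p.1)
      (closedBall 0 R ×ˢ Icc (0:ℝ) T))
    -- `m` is C¹ in time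
    (hm_time : ∀ x ∈ closedBall (0 : EuclideanSpace ℝ (Fin 2)) R,
      ContDiffOn ℝ 1 (m x) (Icc (0:ℝ) T))
    -- `ρ` is 2π-periodic in its first argument and C¹
    (hρ_per : ∀ θ t : ℝ, ρ (θ + 2 * Real.pi) t = ρ θ t)
    (hρ_C1 : ContDiff ℝ 1 (Function.uncurry ρ))
    -- `X_c` is C¹
    (hXc : ContDiffOn ℝ 1 Xc (Icc (0:ℝ) T))
    -- the linearized myosin equation `∂_t m = Δm − m₀ Δφ` in `B_R × (0,T)`
    (heq : ∀ x ∈ ball (0 : EuclideanSpace ℝ (Fin 2)) R, ∀ t ∈ Ioo (0:ℝ) T,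
      deriv (m x) t = laplacian2 (fun y => m y t) x - m₀ * laplacian2 (fun y => φ y t) x)
    -- homogeneous Neumann condition for `m` on the boundary circle
    (hneu : ∀ θ : ℝ, ∀ t ∈ Icc (0:ℝ) T,
      ⟪gradient (fun y => m y t) (pt2 (R * Real.cos θ) (R * Real.sin θ)),
        pt2 (Real.cos θ) (Real.sin θ)⟫ = (0:ℝ))
    -- kinematic condition on the boundary circle
    (hkin : ∀ θ : ℝ, ∀ t ∈ Ioo (0:ℝ) T,
      deriv (ρ θ) t + deriv Xc t * Real.cos θ
        = ⟪gradient (fun y => φ y t) (pt2 (R * Real.cos θ) (R * Real.sin θ)),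
            pt2 (Real.cos θ) (Real.sin θ)⟫) :
    ∀ t₁ ∈ Icc (0:ℝ) T, ∀ t₂ ∈ Icc (0:ℝ) T,
      (∫ x in ball (0 : EuclideanSpace ℝ (Fin 2)) R, m x t₁)
          + m₀ * R * ∫ θ in (-Real.pi)..Real.pi, ρ θ t₁
        = (∫ x in ball (0 : EuclideanSpace ℝ (Fin 2)) R, m x t₂)
            + m₀ * R * ∫ θ in (-Real.pi)..Real.pi, ρ θ t₂ :=
  linearized_myosin_mass_conservation_general R m₀ T hR m φ ρ Xc hm_space hφ_space hm_cont hφ_cont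
    hm_time hρ_C1 heq hneu hkin
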